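/- arXiv:1611.05576 — 3 statements merged into one kernel-verified Lean document; each statement's English description precedes it below -/
import Mathlib

section
/- For constants a > 0 and b > 0 and a given vector F ∈ ℝ², the nonlinear equation a·u + b·|u|·u = F (where |·| is the Euclidean norm) has the unique solution u = F/γ, where γ = a/2 + (1/2)·√(a² + 4b|F|). -/
/-!
Writing the equation as `(a + b‖u‖) • u = F` shows that `u` is a nonnegative multiple of `F`,
and taking norms turns it into the scalar quadratic `(a + b t) t = ‖F‖` for `t = ‖u‖`.
Then `x = a + 2 b t` satisfies `x² = a² + 4 b ‖F‖`, so the factor `a + b‖u‖` is forced to be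
`γ = (a + √(a² + 4 b ‖F‖)) / 2`, the positive root of `γ² = a γ + b ‖F‖`.
-/

noncomputable def forchheimerFactor (a b f : ℝ) : ℝ :=
  a / 2 + (1 / 2) * Real.sqrt (a ^ 2 + 4 * b * f)

section forchheimerFactor

variable {a b f : ℝ}

theorem forchheimerFactor_pos (ha : 0 < a) : 0 < forchheimerFactor a b f := by
  unfold forchheimerFactor
  positivity

theorem forchheimerFactor_sq (hb : 0 ≤ b) (hf : 0 ≤ f) :
    forchheimerFactor a b f ^ 2 = a * forchheimerFactor a b f + b * f := by
  have hsq : Real.sqrt (a ^ 2 + 4 * b * f) ^ 2 = a ^ 2 + 4 * b * f :=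
    Real.sq_sqrt (by positivity)
  unfold forchheimerFactor
  linear_combination hsq / 4

theorem forchheimerFactor_eq_of_mul_eq {t : ℝ} (ha : 0 ≤ a) (hb : 0 ≤ b) (ht : 0 ≤ t)
    (h : (a + b * t) * t = f) : forchheimerFactor a b f = a + b * t := by
  subst h
  have hsqrt : Real.sqrt (a ^ 2 + 4 * b * ((a + b * t) * t)) = a + 2 * b * t := by
    rw [Real.sqrt_eq_iff_eq_sq (by positivity) (by positivity)]
    ring
  rw [forchheimerFactor, hsqrt]
  ring

end forchheimerFactor

theorem smul_add_smul_norm_smul_eq_iff {E : Type*} [NormedAddCommGroup E] [NormedSpace ℝ E]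
    {a b : ℝ} (ha : 0 < a) (hb : 0 ≤ b) (F u : E) :
    a • u + b • (‖u‖ • u) = F ↔ u = (forchheimerFactor a b ‖F‖)⁻¹ • F := by
  rw [smul_smul, ← add_smul]
  constructor
  · intro h
    have hcoef : 0 < a + b * ‖u‖ := by positivity
    have hnorm : (a + b * ‖u‖) * ‖u‖ = ‖F‖ := by
      rw [← h, norm_smul, Real.norm_of_nonneg hcoef.le]
    rw [forchheimerFactor_eq_of_mul_eq ha.le hb (norm_nonneg u) hnorm, ← h, smul_smul,
      inv_mul_cancel₀ hcoef.ne', one_smul]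
  · rintro rfl
    have hγ := forchheimerFactor_pos (b := b) (f := ‖F‖) ha
    have hsq := forchheimerFactor_sq (a := a) hb (norm_nonneg F)
    rw [norm_smul, Real.norm_of_nonneg (inv_nonneg.mpr hγ.le), smul_smul]
    convert one_smul ℝ F using 2
    field_simp
    linear_combination -hsq

theorem stmt0 (a b : ℝ) (ha : 0 < a) (hb : 0 < b)
    (F : EuclideanSpace ℝ (Fin 2)) :
    ∀ u : EuclideanSpace ℝ (Fin 2),
      a • u + b • (‖u‖ • u) = F ↔
        u = (a / 2 + (1 / 2) * Real.sqrt (a ^ 2 + 4 * b * ‖F‖))⁻¹ • F :=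
  smul_add_smul_norm_smul_eq_iff ha hb.le F
end

section
/- For all u, v ∈ ℝ², (|u|·u − |v|·v) · (u − v) ≥ (1/2)·(|u| + |v|)·|u − v|², and in particular the map v ↦ |v|v is monotone. -/
open scoped RealInnerProductSpace

section

variable {E : Type*} [NormedAddCommGroup E] [InnerProductSpace ℝ E]

theorem inner_norm_smul_sub_norm_smul_sub (u v : E) :
    ⟪‖u‖ • u - ‖v‖ • v, u - v⟫ =
      (1 / 2) * (‖u‖ + ‖v‖) * (‖u - v‖ ^ 2 + (‖u‖ - ‖v‖) ^ 2) := by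
  rw [norm_sub_sq_real]
  simp only [inner_sub_left, inner_sub_right, real_inner_smul_left,
    real_inner_self_eq_norm_sq, real_inner_comm v u]
  ring

theorem half_mul_norm_add_mul_norm_sub_sq_le_inner (u v : E) :
    (1 / 2) * (‖u‖ + ‖v‖) * ‖u - v‖ ^ 2 ≤ ⟪‖u‖ • u - ‖v‖ • v, u - v⟫ := by
  rw [inner_norm_smul_sub_norm_smul_sub]
  gcongr
  exact le_add_of_nonneg_right (sq_nonneg _)

end

theorem stmt5 :
    (∀ u v : EuclideanSpace ℝ (Fin 2),
      (1 / 2) * (‖u‖ + ‖v‖) * ‖u - v‖ ^ 2 ≤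
        ⟪‖u‖ • u - ‖v‖ • v, u - v⟫) ∧
    ∀ u v : EuclideanSpace ℝ (Fin 2),
      0 ≤ ⟪‖u‖ • u - ‖v‖ • v, u - v⟫ := by
  refine ⟨half_mul_norm_add_mul_norm_sub_sq_le_inner, fun u v => ?_⟩
  exact le_trans (by positivity) (half_mul_norm_add_mul_norm_sub_sq_le_inner u v)
end

section
/- Let c > 0, d > 0, and f, g ∈ ℝ² (here g denotes the vector ∇p − f with sign flipped). If u ∈ ℝ² satisfies c·u + d·|u|·u = −g, then u = −2g / (c + √(c² + 4d|g|)). -/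
/-! Writing `a = c + d‖u‖ > 0`, the equation says `a • u = -g`, so `‖g‖ = a‖u‖`. Then
`c² + 4d‖g‖ = (c + 2d‖u‖)²`, the denominator `c + √(c² + 4d‖g‖)` equals `2a`, and the formula
reduces to `u = -a⁻¹ • g`. -/

lemma Real.sqrt_sq_add_four_mul_mul_add_mul {c d r : ℝ} (hc : 0 ≤ c) (hd : 0 ≤ d) (hr : 0 ≤ r) :
    √(c ^ 2 + 4 * d * ((c + d * r) * r)) = c + 2 * d * r := by
  rw [show c ^ 2 + 4 * d * ((c + d * r) * r) = (c + 2 * d * r) ^ 2 by ring,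
    Real.sqrt_sq (by positivity)]

section

variable {E : Type*} [NormedAddCommGroup E] [NormedSpace ℝ E]

lemma norm_eq_mul_norm_of_smul_eq_neg {a : ℝ} (ha : 0 ≤ a) {u g : E} (h : a • u = -g) :
    ‖g‖ = a * ‖u‖ := by
  rw [← norm_neg g, ← h, norm_smul, Real.norm_of_nonneg ha]

theorem eq_smul_of_smul_add_norm_smul_eq_neg {c d : ℝ} (hc : 0 < c) (hd : 0 ≤ d) {g u : E}
    (hu : c • u + d • (‖u‖ • u) = -g) :
    u = (-2 / (c + √(c ^ 2 + 4 * d * ‖g‖))) • g := by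
  set a := c + d * ‖u‖
  have ha : 0 < a := by positivity
  have hau : a • u = -g := by rw [← hu, add_smul, smul_smul]
  have hden : c + √(c ^ 2 + 4 * d * ‖g‖) = 2 * a := by
    rw [norm_eq_mul_norm_of_smul_eq_neg ha.le hau,
      Real.sqrt_sq_add_four_mul_mul_add_mul hc.le hd (norm_nonneg u)]
    ring
  rw [hden, ← neg_neg g, ← hau, smul_neg, smul_smul,
    show -2 / (2 * a) * a = -1 by field_simp, neg_one_smul, neg_neg]

end

theorem stmt7 (c d : ℝ) (hc : 0 < c) (hd : 0 < d)
    (g u : EuclideanSpace ℝ (Fin 2))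
    (hu : c • u + d • (‖u‖ • u) = -g) :
    u = (-2 / (c + Real.sqrt (c ^ 2 + 4 * d * ‖g‖))) • g :=
  eq_smul_of_smul_add_norm_smul_eq_neg hc hd.le hu
end
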